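/- Let α > 0, β > 0, t > 0 and y ∈ ℝ; set ξ = y/t, τ = 12αt, k₀ = (β/(48α))^{1/4}, and s = (ξ + 2√(3αβ)) τ^{2/3} / (12α). Then for every k ∈ ℂ with |k − k₀| < k₀, setting ζ = τ^{1/3}(k − k₀), the series S(t,ζ) = Σ_{n=4}^∞ (−1)^{n+1} (β/(48α k₀^{n+1})) τ^{1−n/3} ζⁿ converges absolutely, and t·θ(k, ξ) = t·θ(k₀, ξ) + (4/3)ζ³ + s·ζ + S(t,ζ). -/

import Mathlib

/-- The phase function `θ(k, ξ) = kξ + 4αk³ − β/(4k)` for `k ∈ ℂ ∖ {0}`. -/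
noncomputable def theta (α β ξ : ℝ) (k : ℂ) : ℂ :=
  k * (ξ : ℂ) + 4 * (α : ℂ) * k ^ 3 - (β : ℂ) / (4 * k)

/-- `k₀ = (β/(48α))^{1/4}`. -/
noncomputable def k0def (α β : ℝ) : ℝ := (β / (48 * α)) ^ ((1 : ℝ) / 4)

/-- The `n`-th term of the rescaled Taylor tail
`S(t,ζ) = Σ_{n≥4} (−1)^{n+1} (β/(48α k₀^{n+1})) τ^{1−n/3} ζⁿ`, `τ = 12αt`. -/
noncomputable def Sterm (α β t : ℝ) (ζ : ℂ) (n : ℕ) : ℂ :=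
  (((-1 : ℝ) ^ (n + 1) * (β / (48 * α * (k0def α β) ^ (n + 1)))
      * (12 * α * t) ^ ((1 : ℝ) - (n : ℝ) / 3) : ℝ) : ℂ) * ζ ^ n

set_option maxHeartbeats 1000000 in
/-- Exact rescaled expansion of the phase at `k₀`:
`tθ(k,ξ) = tθ(k₀,ξ) + (4/3)ζ³ + sζ + S(t,ζ)` with `ζ = τ^{1/3}(k − k₀)`,
`s = (ξ + 2√(3αβ)) τ^{2/3}/(12α)`, `τ = 12αt`, valid for `|k − k₀| < k₀`. -/
theorem stmt18 (α β t y : ℝ) (hα : 0 < α) (hβ : 0 < β) (ht : 0 < t) :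
    ∀ k : ℂ, ‖k - (k0def α β : ℂ)‖ < k0def α β →
      (Summable fun n : ℕ =>
        ‖Sterm α β t
            ((((12 * α * t) ^ ((1 : ℝ) / 3) : ℝ) : ℂ) * (k - (k0def α β : ℂ))) (n + 4)‖) ∧
      (t : ℂ) * theta α β (y / t) k
        = (t : ℂ) * theta α β (y / t) (k0def α β : ℂ)
          + (4 / 3) * ((((12 * α * t) ^ ((1 : ℝ) / 3) : ℝ) : ℂ)
              * (k - (k0def α β : ℂ))) ^ 3
          + (((y / t + 2 * Real.sqrt (3 * α * β)) * (12 * α * t) ^ ((2 : ℝ) / 3)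
                / (12 * α) : ℝ) : ℂ)
              * ((((12 * α * t) ^ ((1 : ℝ) / 3) : ℝ) : ℂ) * (k - (k0def α β : ℂ)))
          + ∑' n : ℕ, Sterm α β t
              ((((12 * α * t) ^ ((1 : ℝ) / 3) : ℝ) : ℂ) * (k - (k0def α β : ℂ))) (n + 4) := by
  intro k hk
  set k₀ : ℝ := k0def α β with hk0
  have hk0pos : 0 < k₀ := by
    rw [hk0, k0def]; positivity
  have hτpos : 0 < 12 * α * t := by positivity
  set u : ℂ := k - (k₀ : ℂ) with hu
  have hKnz : ((k₀ : ℝ) : ℂ) ≠ 0 := by exact_mod_cast hk0pos.ne'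
  have hknz : k ≠ 0 := by
    intro h
    rw [hu, h] at hk
    simp [abs_of_pos hk0pos] at hk
  have hk04 : k₀ ^ 4 = β / (48 * α) := by
    have h4 : ((β / (48 * α)) ^ ((1 : ℝ) / 4)) ^ (4 : ℕ) = β / (48 * α) := by
      rw [← Real.rpow_natCast _ 4, ← Real.rpow_mul (by positivity : (0:ℝ) ≤ β / (48 * α))]
      norm_num
    rw [hk0, k0def]
    exact h4
  have hβ48 : β = 48 * α * k₀ ^ 4 := by
    rw [hk04]; field_simp
  have hsqrt : Real.sqrt (3 * α * β) = 12 * α * k₀ ^ 2 := by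
    have h1 : 3 * α * β = (12 * α * k₀ ^ 2) ^ 2 := by rw [hβ48]; ring
    rw [h1, Real.sqrt_sq (by positivity)]
  have hT3 : ((12 * α * t) ^ ((1 : ℝ) / 3)) ^ 3 = 12 * α * t := by
    rw [← Real.rpow_natCast _ 3, ← Real.rpow_mul hτpos.le]
    norm_num
  have hT23 : (12 * α * t) ^ ((2 : ℝ) / 3) * (12 * α * t) ^ ((1 : ℝ) / 3) = 12 * α * t := by
    rw [← Real.rpow_add hτpos]
    norm_num
  have hTm : ∀ m : ℕ, (12 * α * t) ^ ((1 : ℝ) - (m : ℝ) / 3) * ((12 * α * t) ^ ((1 : ℝ) / 3)) ^ m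
      = 12 * α * t := by
    intro m
    rw [← Real.rpow_natCast ((12 * α * t) ^ ((1 : ℝ) / 3)) m, ← Real.rpow_mul hτpos.le,
      ← Real.rpow_add hτpos, show (1 : ℝ) - (m : ℝ) / 3 + 1 / 3 * (m : ℝ) = 1 by ring,
      Real.rpow_one]
  set T : ℂ := (((12 * α * t) ^ ((1 : ℝ) / 3) : ℝ) : ℂ) with hT
  have hSterm : ∀ m : ℕ, Sterm α β t (T * u) m
      = ((((-1 : ℝ) ^ (m + 1) * (t * β / (4 * k₀ ^ (m + 1))) : ℝ)) : ℂ) * u ^ m := by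
    intro m
    have hc : ((-1 : ℝ) ^ (m + 1) * (β / (48 * α * k₀ ^ (m + 1)))
        * (12 * α * t) ^ ((1 : ℝ) - (m : ℝ) / 3))
        * ((12 * α * t) ^ ((1 : ℝ) / 3)) ^ m
        = (-1) ^ (m + 1) * (t * β / (4 * k₀ ^ (m + 1))) := by
      calc ((-1 : ℝ) ^ (m + 1) * (β / (48 * α * k₀ ^ (m + 1)))
            * (12 * α * t) ^ ((1 : ℝ) - (m : ℝ) / 3))
            * ((12 * α * t) ^ ((1 : ℝ) / 3)) ^ m
          = (-1 : ℝ) ^ (m + 1) * (β / (48 * α * k₀ ^ (m + 1)))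
            * ((12 * α * t) ^ ((1 : ℝ) - (m : ℝ) / 3)
              * ((12 * α * t) ^ ((1 : ℝ) / 3)) ^ m) := by ring
        _ = (-1 : ℝ) ^ (m + 1) * (β / (48 * α * k₀ ^ (m + 1))) * (12 * α * t) := by
            rw [hTm m]
        _ = (-1) ^ (m + 1) * (t * β / (4 * k₀ ^ (m + 1))) := by
            field_simp
            ring
    have hpow : (T * u) ^ m
        = ((((12 * α * t) ^ ((1 : ℝ) / 3)) ^ m : ℝ) : ℂ) * u ^ m := by
      rw [mul_pow, hT, Complex.ofReal_pow]
    rw [Sterm, ← hk0, hpow, ← mul_assoc, ← Complex.ofReal_mul, hc]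
  set r : ℂ := -u / (k₀ : ℂ) with hr
  have hrlt : ‖r‖ < 1 := by
    rw [hr, norm_div, norm_neg]
    rw [Complex.norm_real, Real.norm_eq_abs, abs_of_pos hk0pos]
    rw [div_lt_one hk0pos]
    exact hk
  set C0 : ℂ := ((((-1 : ℝ) ^ (5 : ℕ) * (t * β / (4 * k₀ ^ 5)) : ℝ)) : ℂ) * u ^ 4 with hC0
  have hSg : ∀ n : ℕ, Sterm α β t (T * u) (n + 4) = C0 * r ^ n := by
    intro n
    have hrn : r ^ n = ((-1 : ℂ)) ^ n * u ^ n / ((k₀ : ℝ) : ℂ) ^ n := by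
      rw [hr, div_pow, neg_pow]
    rw [hSterm (n + 4), hC0, hrn]
    push_cast
    field_simp
    ring
  have hsum : Summable fun n : ℕ => ‖Sterm α β t (T * u) (n + 4)‖ := by
    apply Summable.congr ((summable_geometric_of_lt_one (norm_nonneg r) hrlt).mul_left ‖C0‖)
    intro n
    rw [hSg n]
    simp [norm_mul, norm_pow]
  refine ⟨hsum, ?_⟩
  have htsum : ∑' n : ℕ, Sterm α β t (T * u) (n + 4) = C0 * (1 - r)⁻¹ := by
    rw [tsum_congr hSg, tsum_mul_left, tsum_geometric_of_norm_lt_one hrlt]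
  rw [htsum]
  have h1r : (1 : ℂ) - r = k / (k₀ : ℂ) := by
    rw [hr, hu]
    field_simp
    ring
  rw [h1r]
  have hs : (y / t + 2 * Real.sqrt (3 * α * β)) * (12 * α * t) ^ ((2 : ℝ) / 3) / (12 * α)
      * (12 * α * t) ^ ((1 : ℝ) / 3) = (y / t + 24 * α * k₀ ^ 2) * t := by
    calc (y / t + 2 * Real.sqrt (3 * α * β)) * (12 * α * t) ^ ((2 : ℝ) / 3) / (12 * α)
          * (12 * α * t) ^ ((1 : ℝ) / 3)
        = (y / t + 2 * Real.sqrt (3 * α * β))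
          * ((12 * α * t) ^ ((2 : ℝ) / 3) * (12 * α * t) ^ ((1 : ℝ) / 3)) / (12 * α) := by
          ring
      _ = (y / t + 24 * α * k₀ ^ 2) * t := by
          rw [hT23, hsqrt]
          field_simp
          ring
  have hscoef : ((((y / t + 2 * Real.sqrt (3 * α * β)) * (12 * α * t) ^ ((2 : ℝ) / 3)
      / (12 * α) : ℝ)) : ℂ) * (T * u) = (((y / t + 24 * α * k₀ ^ 2) * t : ℝ) : ℂ) * u := by
    rw [hT, ← mul_assoc, ← Complex.ofReal_mul, hs]
  have hcube : (4 / 3 : ℂ) * (T * u) ^ 3 = (((12 * α * t : ℝ)) : ℂ) * (4 / 3) * u ^ 3 := by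
    rw [mul_pow, hT, ← Complex.ofReal_pow, hT3]
    ring
  rw [hscoef, hcube, hC0]
  have hβc : (β : ℂ) = 48 * (α : ℂ) * ((k₀ : ℝ) : ℂ) ^ 4 := by exact_mod_cast hβ48
  rw [theta, theta]
  have htnz : (t : ℂ) ≠ 0 := by exact_mod_cast ht.ne'
  have hαnz : (α : ℂ) ≠ 0 := by exact_mod_cast hα.ne'
  push_cast
  rw [hβc, inv_div, hu]
  field_simp [hknz, hKnz, htnz, hαnz]
  ring_nf
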